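/- Let a, b ∈ ℝ^n be nonnegative nonincreasing vectors with ∑_{i=1}^k b_i ≤ ∑_{i=1}^k a_i for all k = 1,...,n. Then there exists a substochastic monotone matrix A such that Aa = b. -/

import Mathlib

def Substochastic {n : ℕ} (A : Matrix (Fin n) (Fin n) ℝ) : Prop :=
  (∀ i j, 0 ≤ A i j) ∧ (∀ i, ∑ j, A i j ≤ 1) ∧ (∀ j, ∑ i, A i j ≤ 1)

/-- A matrix is monotone if it maps nonnegative nonincreasing vectors to nonincreasing vectors. -/
def MonotoneMatrix {n : ℕ} (A : Matrix (Fin n) (Fin n) ℝ) : Prop :=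
  ∀ x : Fin n → ℝ, (∀ i, 0 ≤ x i) → (∀ i j : Fin n, i ≤ j → x j ≤ x i) →
    ∀ i j : Fin n, i ≤ j → A.mulVec x j ≤ A.mulVec x i

/-!
For nonincreasing `a` and `b` with `b ≺ a` (equal sums), a doubly stochastic monotone `M` with
`M a = b` is built by induction on `n`. Shrink `a` towards its mean, `a' = t a + (1 - t) ā`, with
the least `t ≥ 0` keeping `b ≺ a'`. If `t = 0` then `b` is constant, equal to `ā`. Otherwise a
proper prefix sum of `b` equals that of `a'`, so the problem splits there into two smaller ones;
their block-diagonal solution is still monotone, since each of its rows averages the entries of its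
own block, and every entry of the first block dominates every entry of the second.

Under mere submajorization, first cap the prefix sums of `a` at `∑ b`: the capped vector is
`D a` for a diagonal `D = diag(1, …, 1, r, 0, …, 0)`, which is substochastic and monotone, and
`b` is majorized by it.
-/

open Finset Matrix

section PrefixSum

variable {n : ℕ}

def prefixSum (v : Fin n → ℝ) (k : ℕ) : ℝ := ∑ i : Fin n with i.val < k, v i

@[simp] lemma prefixSum_zero (v : Fin n → ℝ) : prefixSum v 0 = 0 := by
  simp [prefixSum]

lemma prefixSum_of_le (v : Fin n → ℝ) {k : ℕ} (hk : n ≤ k) :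
    prefixSum v k = ∑ i, v i := by
  rw [prefixSum, filter_true_of_mem fun i _ => i.isLt.trans_le hk]

lemma prefixSum_min (v : Fin n → ℝ) (k : ℕ) : prefixSum v (min k n) = prefixSum v k := by
  unfold prefixSum
  congr 1
  ext i
  simp

lemma prefixSum_succ (v : Fin n → ℝ) {k : ℕ} (hk : k < n) :
    prefixSum v (k + 1) = prefixSum v k + v ⟨k, hk⟩ := by
  have : univ.filter (fun i : Fin n => i.val < k + 1) =
      insert ⟨k, hk⟩ (univ.filter fun i : Fin n => i.val < k) := by
    ext i
    simp only [Order.lt_add_one_iff, mem_filter, mem_univ, true_and, mem_insert, Fin.ext_iff]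
    omega
  rw [prefixSum, prefixSum, this, sum_insert (by simp), add_comm]

lemma sum_Iic_eq_prefixSum (v : Fin n → ℝ) (k : Fin n) :
    ∑ i ∈ Iic k, v i = prefixSum v (k.val + 1) := by
  have : Iic k = univ.filter fun i : Fin n => i.val < k.val + 1 := by
    ext i
    simp only [mem_Iic, mem_filter, mem_univ, true_and, Fin.le_def]
    omega
  rw [prefixSum, this]

lemma prefixSum_mono {v : Fin n → ℝ} (hv : 0 ≤ v) {k l : ℕ} (hkl : k ≤ l) :
    prefixSum v k ≤ prefixSum v l :=
  sum_le_sum_of_subset_of_nonneg (fun i => by simp only [mem_filter, mem_univ, true_and]; omega)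
    fun i _ _ => hv i

lemma prefixSum_add (v w : Fin n → ℝ) (k : ℕ) :
    prefixSum (v + w) k = prefixSum v k + prefixSum w k :=
  sum_add_distrib

lemma prefixSum_smul (c : ℝ) (v : Fin n → ℝ) (k : ℕ) :
    prefixSum (c • v) k = c * prefixSum v k :=
  (mul_sum _ _ _).symm

lemma prefixSum_const (c : ℝ) {k : ℕ} (hk : k ≤ n) :
    prefixSum (fun _ : Fin n => c) k = k * c := by
  simp [prefixSum, Fin.card_filter_val_lt, hk]

lemma prefixSum_comp_castAdd {m : ℕ} (v : Fin (n + m) → ℝ) (k : ℕ) :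
    prefixSum (v ∘ Fin.castAdd m) k = prefixSum v (min k n) := by
  simp only [prefixSum, sum_filter, Fin.sum_univ_add, Function.comp_apply, Fin.val_castAdd,
    Fin.val_natAdd, lt_min_iff]
  simp

lemma prefixSum_comp_natAdd {m : ℕ} (v : Fin (n + m) → ℝ) (k : ℕ) :
    prefixSum (v ∘ Fin.natAdd n) k = prefixSum v (n + k) - prefixSum v n := by
  simp only [prefixSum, sum_filter, Fin.sum_univ_add, Function.comp_apply, Fin.val_castAdd,
    Fin.val_natAdd]
  have : ∀ i : Fin n, i.val < n + k := fun i => by omega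
  simp [this]

lemma prefixSum_le_of_sum_Iic_le {a b : Fin n → ℝ}
    (h : ∀ k : Fin n, ∑ i ∈ Iic k, b i ≤ ∑ i ∈ Iic k, a i) (k : ℕ) :
    prefixSum b k ≤ prefixSum a k := by
  rw [← prefixSum_min b, ← prefixSum_min a]
  rcases Nat.eq_zero_or_pos (min k n) with hk | hk
  · simp [hk]
  · obtain ⟨l, hl⟩ := Nat.exists_eq_add_of_le' hk
    have hln : l < n := by omega
    simpa only [sum_Iic_eq_prefixSum, hl] using h ⟨l, hln⟩

/-- Chebyshev's sum inequality against the indicator of `{i | i < k}`. -/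
lemma mul_sum_le_card_mul_prefixSum {v : Fin n → ℝ} (hv : Antitone v) {k : ℕ} (hk : k ≤ n) :
    k * ∑ i, v i ≤ n * prefixSum v k := by
  have hind : Antitone fun i : Fin n => if (i : ℕ) < k then (1 : ℝ) else 0 := by
    intro i j hij
    by_cases hj : (j : ℕ) < k
    · simp [hj, (Fin.le_def.mp hij).trans_lt hj]
    · simp only [hj, if_false]
      positivity
  have := (hv.monovary hind).sum_mul_sum_le_card_mul_sum
  simpa [prefixSum, sum_filter, Fin.card_filter_val_lt, hk, mul_comm] using this

end PrefixSum

section MatrixLemmas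

variable {n : ℕ}

lemma mulVec_nonneg {ι : Type*} [Fintype ι] {A : Matrix ι ι ℝ} (hA : ∀ i j, 0 ≤ A i j)
    {x : ι → ℝ} (hx : 0 ≤ x) : 0 ≤ A *ᵥ x :=
  fun i => (sum_nonneg fun j _ => mul_nonneg (hA i j) (hx j) : 0 ≤ ∑ j, A i j * x j)

lemma MonotoneMatrix.mul {A B : Matrix (Fin n) (Fin n) ℝ} (hA : MonotoneMatrix A)
    (hB : MonotoneMatrix B) (hB₀ : ∀ i j, 0 ≤ B i j) : MonotoneMatrix (A * B) := by
  intro x hx₀ hx i j hij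
  rw [← mulVec_mulVec]
  exact hA _ (mulVec_nonneg hB₀ hx₀) (hB x hx₀ hx) i j hij

lemma monotoneMatrix_diagonal {d : Fin n → ℝ} (hd₀ : 0 ≤ d) (hd : Antitone d) :
    MonotoneMatrix (diagonal d) := by
  intro x hx₀ hx i j hij
  simp only [mulVec_diagonal]
  exact mul_le_mul (hd hij) (hx i j hij) (hx₀ j) (hd₀ i)

lemma substochastic_of_mem_doublyStochastic {A : Matrix (Fin n) (Fin n) ℝ}
    (hA : A ∈ doublyStochastic ℝ (Fin n)) : Substochastic A :=
  ⟨fun _ _ => nonneg_of_mem_doublyStochastic hA,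
    fun i => (sum_row_of_mem_doublyStochastic hA i).le,
    fun j => (sum_col_of_mem_doublyStochastic hA j).le⟩

lemma Substochastic.mul_diagonal {A : Matrix (Fin n) (Fin n) ℝ} (hA : Substochastic A)
    {d : Fin n → ℝ} (hd₀ : 0 ≤ d) (hd₁ : d ≤ 1) : Substochastic (A * diagonal d) := by
  obtain ⟨hA₀, hrow, hcol⟩ := hA
  simp only [Substochastic, Matrix.mul_diagonal]
  refine ⟨fun i j => mul_nonneg (hA₀ i j) (hd₀ j), fun i => ?_, fun j => ?_⟩
  · calc ∑ j, A i j * d j ≤ ∑ j, A i j :=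
          sum_le_sum fun j _ => mul_le_of_le_one_right (hA₀ i j) (hd₁ j)
      _ ≤ 1 := hrow i
  · rw [← sum_mul]
    exact mul_le_one₀ (hcol j) (hd₀ j) (hd₁ j)

lemma exists_le_mulVec_of_mem_rowStochastic {ι : Type*} [Fintype ι] [DecidableEq ι]
    {A : Matrix ι ι ℝ} (hA : A ∈ rowStochastic ℝ ι) (x : ι → ℝ) (i : ι) :
    ∃ j, x j ≤ (A *ᵥ x) i := by
  have : Nonempty ι := ⟨i⟩
  obtain ⟨j, hj⟩ := Finite.exists_min x
  refine ⟨j, ?_⟩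
  calc x j = ∑ l, A i l * x j := by rw [← sum_mul, sum_row_of_mem_rowStochastic hA, one_mul]
    _ ≤ (A *ᵥ x) i := sum_le_sum fun l _ => mul_le_mul_of_nonneg_left (hj l)
        (nonneg_of_mem_rowStochastic hA)

lemma exists_mulVec_le_of_mem_rowStochastic {ι : Type*} [Fintype ι] [DecidableEq ι]
    {A : Matrix ι ι ℝ} (hA : A ∈ rowStochastic ℝ ι) (x : ι → ℝ) (i : ι) :
    ∃ j, (A *ᵥ x) i ≤ x j := by
  obtain ⟨j, hj⟩ := exists_le_mulVec_of_mem_rowStochastic hA (-x) i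
  exact ⟨j, by simpa [mulVec_neg] using hj⟩

end MatrixLemmas

section ShrinkToMean

variable {n : ℕ}

noncomputable def mean (v : Fin n → ℝ) : ℝ := (∑ i, v i) / n

lemma card_mul_mean (v : Fin n → ℝ) : n * mean v = ∑ i, v i := by
  rcases Nat.eq_zero_or_pos n with rfl | hn
  · simp
  · exact mul_div_cancel₀ _ (Nat.cast_pos.mpr hn).ne'

noncomputable def shrinkToMean (n : ℕ) (t : ℝ) : Matrix (Fin n) (Fin n) ℝ :=
  t • 1 + (1 - t) • of fun _ _ => (n : ℝ)⁻¹

lemma shrinkToMean_mulVec (t : ℝ) (x : Fin n → ℝ) (i : Fin n) :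
    (shrinkToMean n t *ᵥ x) i = t * x i + (1 - t) * mean x := by
  simp only [shrinkToMean, add_mulVec, smul_mulVec, one_mulVec, Pi.add_apply, Pi.smul_apply,
    smul_eq_mul]
  simp [mulVec, dotProduct, ← mul_sum, mean, div_eq_inv_mul]

lemma prefixSum_shrinkToMean_mulVec (t : ℝ) (x : Fin n → ℝ) {k : ℕ} (hk : k ≤ n) :
    prefixSum (shrinkToMean n t *ᵥ x) k = t * prefixSum x k + (1 - t) * (k * mean x) := by
  have : shrinkToMean n t *ᵥ x = t • x + fun _ => (1 - t) * mean x := by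
    ext i
    simp [shrinkToMean_mulVec]
  rw [this, prefixSum_add, prefixSum_smul, prefixSum_const _ hk]
  ring

lemma shrinkToMean_mem_doublyStochastic {t : ℝ} (ht₀ : 0 ≤ t) (ht₁ : t ≤ 1) :
    shrinkToMean n t ∈ doublyStochastic ℝ (Fin n) := by
  have hmean : (of fun _ _ => (n : ℝ)⁻¹ : Matrix (Fin n) (Fin n) ℝ) ∈
      doublyStochastic ℝ (Fin n) := by
    refine mem_doublyStochastic_iff_sum.mpr
      ⟨fun _ _ => inv_nonneg.mpr n.cast_nonneg, fun i => ?_, fun j => ?_⟩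
    · simp [(Nat.cast_pos.mpr i.pos).ne']
    · simp [(Nat.cast_pos.mpr j.pos).ne']
  exact convex_doublyStochastic (one_mem _) hmean ht₀ (by linarith) (by ring)

lemma Antitone.shrinkToMean_mulVec {t : ℝ} (ht₀ : 0 ≤ t) {x : Fin n → ℝ}
    (hx : Antitone x) : Antitone (shrinkToMean n t *ᵥ x) := by
  intro i j hij
  simp only [_root_.shrinkToMean_mulVec]
  gcongr
  exact hx hij

lemma monotoneMatrix_shrinkToMean {t : ℝ} (ht₀ : 0 ≤ t) : MonotoneMatrix (shrinkToMean n t) :=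
  fun _ _ hx => Antitone.shrinkToMean_mulVec ht₀ hx

end ShrinkToMean

section FinBlockDiagonal

variable {k m : ℕ}

lemma antitone_finAppend {α : Type*} [Preorder α] {u : Fin k → α} {v : Fin m → α}
    (hu : Antitone u) (hv : Antitone v) (huv : ∀ i j, v j ≤ u i) :
    Antitone (Fin.append u v) := by
  intro p q hpq
  induction p using Fin.addCases with
  | left i =>
    induction q using Fin.addCases with
    | left j => simpa using hu ((Fin.strictMono_castAdd m).le_iff_le.mp hpq)
    | right j => simpa using huv i j
  | right i =>
    induction q using Fin.addCases with
    | left j =>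
      simp only [Fin.le_def, Fin.val_natAdd, Fin.val_castAdd] at hpq
      omega
    | right j => simpa using hv ((Fin.natAdd_le_natAdd_iff k).mp hpq)

noncomputable def finBlockDiagonal (A : Matrix (Fin k) (Fin k) ℝ)
    (B : Matrix (Fin m) (Fin m) ℝ) : Matrix (Fin (k + m)) (Fin (k + m)) ℝ :=
  reindex finSumFinEquiv finSumFinEquiv (fromBlocks A 0 0 B)

lemma finBlockDiagonal_mulVec_append (A : Matrix (Fin k) (Fin k) ℝ)
    (B : Matrix (Fin m) (Fin m) ℝ) (u : Fin k → ℝ) (v : Fin m → ℝ) :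
    finBlockDiagonal A B *ᵥ Fin.append u v = Fin.append (A *ᵥ u) (B *ᵥ v) := by
  ext i
  induction i using Fin.addCases <;>
    simp [finBlockDiagonal, mulVec, dotProduct, Fin.sum_univ_add]

lemma finBlockDiagonal_mem_doublyStochastic {A : Matrix (Fin k) (Fin k) ℝ}
    {B : Matrix (Fin m) (Fin m) ℝ} (hA : A ∈ doublyStochastic ℝ (Fin k))
    (hB : B ∈ doublyStochastic ℝ (Fin m)) :
    finBlockDiagonal A B ∈ doublyStochastic ℝ (Fin (k + m)) := by
  refine reindex_mem_doublyStochastic (mem_doublyStochastic_iff_sum.mpr ⟨?_, ?_, ?_⟩)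
  · rintro (i | i) (j | j) <;> simp [nonneg_of_mem_doublyStochastic hA,
      nonneg_of_mem_doublyStochastic hB]
  · rintro (i | i) <;>
      simp [sum_row_of_mem_doublyStochastic hA, sum_row_of_mem_doublyStochastic hB]
  · rintro (j | j) <;>
      simp [sum_col_of_mem_doublyStochastic hA, sum_col_of_mem_doublyStochastic hB]

/-- Across the seam: row-stochasticity puts `A *ᵥ u` above `min u` and `B *ᵥ v` below
`max v`. -/
lemma monotoneMatrix_finBlockDiagonal {A : Matrix (Fin k) (Fin k) ℝ}
    {B : Matrix (Fin m) (Fin m) ℝ} (hA : A ∈ rowStochastic ℝ (Fin k))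
    (hB : B ∈ rowStochastic ℝ (Fin m)) (hAm : MonotoneMatrix A) (hBm : MonotoneMatrix B) :
    MonotoneMatrix (finBlockDiagonal A B) := by
  intro x hx₀ hx
  rw [← Fin.append_castAdd_natAdd (f := x), finBlockDiagonal_mulVec_append]
  have hx' : Antitone x := hx
  refine antitone_finAppend
    (hAm _ (fun i => hx₀ _) (hx'.comp_monotone (Fin.strictMono_castAdd m).monotone))
    (hBm _ (fun i => hx₀ _) (hx'.comp_monotone (Fin.strictMono_natAdd k).monotone)) fun i j => ?_
  obtain ⟨j', hj'⟩ := exists_mulVec_le_of_mem_rowStochastic hB (x ∘ Fin.natAdd k) j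
  obtain ⟨i', hi'⟩ := exists_le_mulVec_of_mem_rowStochastic hA (x ∘ Fin.castAdd m) i
  have hseam : Fin.castAdd m i' ≤ Fin.natAdd k j' := by
    simp only [Fin.le_def, Fin.val_castAdd, Fin.val_natAdd]
    omega
  exact hj'.trans ((hx' hseam).trans hi')

end FinBlockDiagonal

section Majorization

variable {n : ℕ}

/-- Prefix sums are taken in the given order, so this is majorization `b ≺ a` only for
nonincreasing vectors. -/
def MajorizedBy (b a : Fin n → ℝ) : Prop :=
  (∀ k, prefixSum b k ≤ prefixSum a k) ∧ ∑ i, b i = ∑ i, a i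

lemma MajorizedBy.comp_castAdd {m K : ℕ} {a b : Fin (K + m) → ℝ} (h : MajorizedBy b a)
    (hK : prefixSum b K = prefixSum a K) :
    MajorizedBy (b ∘ Fin.castAdd m) (a ∘ Fin.castAdd m) := by
  refine ⟨fun k => ?_, ?_⟩
  · simpa only [prefixSum_comp_castAdd] using h.1 (min k K)
  · rw [← prefixSum_of_le _ le_rfl, ← prefixSum_of_le _ le_rfl]
    simpa only [prefixSum_comp_castAdd, min_self] using hK

lemma MajorizedBy.comp_natAdd {m K : ℕ} {a b : Fin (K + m) → ℝ} (h : MajorizedBy b a)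
    (hK : prefixSum b K = prefixSum a K) :
    MajorizedBy (b ∘ Fin.natAdd K) (a ∘ Fin.natAdd K) := by
  refine ⟨fun k => ?_, ?_⟩
  · simpa only [prefixSum_comp_natAdd, hK, sub_le_sub_iff_right] using h.1 (K + k)
  · rw [← prefixSum_of_le _ le_rfl, ← prefixSum_of_le _ le_rfl, prefixSum_comp_natAdd,
      prefixSum_comp_natAdd, hK, prefixSum_of_le b le_rfl, prefixSum_of_le a le_rfl, h.2]

lemma MajorizedBy.eq_const {b : Fin n → ℝ} {c : ℝ} (hb : Antitone b)
    (h : MajorizedBy b fun _ => c) : b = fun _ => c := by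
  obtain ⟨hle, hsum⟩ := h
  ext i
  have hn : 0 < n := i.pos
  have hfirst : b ⟨0, hn⟩ ≤ c := by
    simpa [prefixSum_succ b hn, prefixSum_const c (Nat.succ_le_of_lt hn)] using hle 1
  have hlast : c ≤ b ⟨n - 1, by omega⟩ := by
    have hsplit := prefixSum_succ b (Nat.sub_lt hn one_pos)
    rw [show n - 1 + 1 = n by omega, prefixSum_of_le _ le_rfl, hsum] at hsplit
    have := hle (n - 1)
    rw [prefixSum_const c (Nat.sub_le n 1), Nat.cast_sub hn] at this
    simp only [sum_const, card_univ, Fintype.card_fin, nsmul_eq_mul] at hsplit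
    push_cast at this
    linarith
  exact le_antisymm ((hb (Fin.le_def.mpr (Nat.zero_le _))).trans hfirst)
    (hlast.trans (hb (Fin.le_def.mpr (Nat.le_sub_one_of_lt i.isLt))))

end Majorization

section ShrinkRatio

variable {n : ℕ} {a b : Fin n → ℝ}

lemma mul_mean_le_prefixSum (ha : Antitone a) {k : ℕ} (hk : k ≤ n) :
    k * mean a ≤ prefixSum a k := by
  rcases Nat.eq_zero_or_pos n with rfl | hn
  · simp [Nat.le_zero.mp hk]
  rw [mean, mul_div_assoc', div_le_iff₀ (by exact_mod_cast hn), mul_comm _ (n : ℝ)]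
  exact mul_sum_le_card_mul_prefixSum ha hk

/-- The least `t ≥ 0` with `b ≺ shrinkToMean n t *ᵥ a`, comparing the excesses of the prefix
sums over those of the mean vector. A vanishing denominator gives the junk value `0`, harmless
because the numerator is then `≤ 0`. -/
noncomputable def shrinkRatio (a b : Fin n → ℝ) : ℝ :=
  (range (n + 1)).sup' nonempty_range_add_one fun k =>
    (prefixSum b k - k * mean a) / (prefixSum a k - k * mean a)

lemma shrinkRatio_nonneg : 0 ≤ shrinkRatio a b :=
  le_sup'_of_le _ (mem_range.mpr n.succ_pos) (by simp)

lemma shrinkRatio_le_one (ha : Antitone a) (hab : ∀ k, prefixSum b k ≤ prefixSum a k) :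
    shrinkRatio a b ≤ 1 :=
  sup'_le _ _ fun k hk => div_le_one_of_le₀ (by linarith [hab k])
    (sub_nonneg.mpr (mul_mean_le_prefixSum ha (Nat.lt_succ_iff.mp (mem_range.mp hk))))

lemma MajorizedBy.shrinkToMean_mulVec (ha : Antitone a) (h : MajorizedBy b a) :
    MajorizedBy b (shrinkToMean n (shrinkRatio a b) *ᵥ a) := by
  set t := shrinkRatio a b
  have hT := shrinkToMean_mem_doublyStochastic (n := n) shrinkRatio_nonneg
    (shrinkRatio_le_one ha h.1)
  refine ⟨fun k => ?_, by rw [sum_mulVec_of_mem_doublyStochastic hT, h.2]⟩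
  rw [← prefixSum_min b, ← prefixSum_min (shrinkToMean n t *ᵥ a),
    prefixSum_shrinkToMean_mulVec _ _ (min_le_right k n)]
  set l := min k n
  have hg : 0 ≤ prefixSum a l - l * mean a :=
    sub_nonneg.mpr (mul_mean_le_prefixSum ha (min_le_right k n))
  have hh := h.1 l
  suffices prefixSum b l - l * mean a ≤ t * (prefixSum a l - l * mean a) by
    linarith
  rcases hg.eq_or_lt with hg | hg
  · rw [← hg]
    linarith
  · rw [← div_le_iff₀ hg]
    exact le_sup' (fun k : ℕ => (prefixSum b k - k * mean a) / (prefixSum a k - k * mean a))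
      (mem_range.mpr (Nat.lt_succ_of_le (min_le_right k n)))

lemma exists_prefixSum_eq_shrinkToMean_mulVec (ht : shrinkRatio a b ≠ 0) :
    ∃ K, 0 < K ∧ K < n ∧
      prefixSum b K = prefixSum (shrinkToMean n (shrinkRatio a b) *ᵥ a) K := by
  obtain ⟨K, hK, hKt⟩ := exists_mem_eq_sup' nonempty_range_add_one fun k : ℕ =>
    (prefixSum b k - k * mean a) / (prefixSum a k - k * mean a)
  have hKn := Nat.lt_succ_iff.mp (mem_range.mp hK)
  have hden : prefixSum a K - K * mean a ≠ 0 := by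
    intro h0
    exact ht (by rw [shrinkRatio, hKt, h0, div_zero])
  refine ⟨K, Nat.pos_of_ne_zero ?_, lt_of_le_of_ne hKn ?_, ?_⟩
  · rintro rfl
    simp at hden
  · rintro rfl
    exact hden (by rw [prefixSum_of_le _ le_rfl, card_mul_mean, sub_self])
  · rw [prefixSum_shrinkToMean_mulVec _ _ hKn]
    have : shrinkRatio a b * (prefixSum a K - K * mean a) =
        prefixSum b K - K * mean a := by
      rw [shrinkRatio, hKt, div_mul_cancel₀ _ hden]
    linarith

end ShrinkRatio

theorem exists_mem_doublyStochastic_monotoneMatrix_mulVec_eq {n : ℕ} {a b : Fin n → ℝ}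
    (ha : Antitone a) (hb : Antitone b) (hab : MajorizedBy b a) :
    ∃ M ∈ doublyStochastic ℝ (Fin n), MonotoneMatrix M ∧ M *ᵥ a = b := by
  induction n using Nat.strong_induction_on with
  | _ n ih =>
  set t := shrinkRatio a b
  have ht₀ : 0 ≤ t := shrinkRatio_nonneg
  have hT := shrinkToMean_mem_doublyStochastic (n := n) ht₀ (shrinkRatio_le_one ha hab.1)
  have hab' := hab.shrinkToMean_mulVec ha
  rcases eq_or_ne t 0 with ht | ht
  · refine ⟨shrinkToMean n t, hT, monotoneMatrix_shrinkToMean ht₀, ?_⟩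
    have hconst : shrinkToMean n t *ᵥ a = fun _ => mean a := by
      ext i
      simp [shrinkToMean_mulVec, ht]
    rw [hconst] at hab' ⊢
    exact (hab'.eq_const hb).symm
  obtain ⟨K, hK₀, hKn, hK⟩ := exists_prefixSum_eq_shrinkToMean_mulVec ht
  obtain ⟨m, rfl⟩ := Nat.exists_eq_add_of_le hKn.le
  set a' := shrinkToMean (K + m) t *ᵥ a
  have ha' : Antitone a' := ha.shrinkToMean_mulVec ht₀
  have hcast := Fin.strictMono_castAdd (n := K) m
  have hnat := Fin.strictMono_natAdd (m := m) K
  obtain ⟨M₁, hM₁, hM₁m, hM₁a⟩ := ih K hKn (ha'.comp_monotone hcast.monotone)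
    (hb.comp_monotone hcast.monotone) (hab'.comp_castAdd hK)
  obtain ⟨M₂, hM₂, hM₂m, hM₂a⟩ := ih m (by omega) (ha'.comp_monotone hnat.monotone)
    (hb.comp_monotone hnat.monotone) (hab'.comp_natAdd hK)
  have hM := monotoneMatrix_finBlockDiagonal
    (mem_doublyStochastic_iff_mem_rowStochastic_and_mem_colStochastic.mp hM₁).1
    (mem_doublyStochastic_iff_mem_rowStochastic_and_mem_colStochastic.mp hM₂).1 hM₁m hM₂m
  refine ⟨finBlockDiagonal M₁ M₂ * shrinkToMean (K + m) t,
    mul_mem (finBlockDiagonal_mem_doublyStochastic hM₁ hM₂) hT,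
    hM.mul (monotoneMatrix_shrinkToMean ht₀) fun _ _ => nonneg_of_mem_doublyStochastic hT, ?_⟩
  simp only [Function.comp_def] at hM₁a hM₂a
  rw [← mulVec_mulVec]
  change finBlockDiagonal M₁ M₂ *ᵥ a' = b
  rw [← Fin.append_castAdd_natAdd (f := a'), finBlockDiagonal_mulVec_append, hM₁a, hM₂a,
    Fin.append_castAdd_natAdd]

section TruncateMass

variable {n : ℕ} {a : Fin n → ℝ} {B : ℝ}

noncomputable def truncateMass (a : Fin n → ℝ) (B : ℝ) : Fin n → ℝ :=
  fun i => min (prefixSum a (i + 1)) B - min (prefixSum a i) B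

lemma prefixSum_truncateMass (hB : 0 ≤ B) (k : ℕ) :
    prefixSum (truncateMass a B) k = min (prefixSum a k) B := by
  induction k with
  | zero => simp [hB]
  | succ k ih =>
    rcases lt_or_ge k n with hk | hk
    · rw [prefixSum_succ _ hk, ih, truncateMass]
      ring
    · rw [prefixSum_of_le _ (hk.trans k.le_succ), prefixSum_of_le a (hk.trans k.le_succ),
        ← prefixSum_of_le a hk, ← ih, prefixSum_of_le _ hk]

lemma truncateMass_nonneg (ha : 0 ≤ a) : 0 ≤ truncateMass a B :=
  fun i => sub_nonneg.mpr (min_le_min_right B (prefixSum_mono ha i.val.le_succ))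

lemma truncateMass_le (ha : 0 ≤ a) : truncateMass a B ≤ a := by
  intro i
  have := prefixSum_succ a i.isLt
  simp only [truncateMass, Fin.eta] at this ⊢
  have hai : (0 : ℝ) ≤ a i := ha i
  rw [this]
  rcases le_total (prefixSum a i) B with h | h
  · linarith [min_eq_left h, min_le_left (prefixSum a i + a i) B]
  · linarith [min_eq_right h, min_eq_right (h.trans (le_add_of_nonneg_right hai))]

lemma truncateMass_eq_of_lt (ha : 0 ≤ a) {i j : Fin n} (hij : i < j)
    (hj : truncateMass a B j ≠ 0) : truncateMass a B i = a i := by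
  have hjB : prefixSum a j < B := by
    by_contra! h
    exact hj (by simp [truncateMass, min_eq_right h,
      min_eq_right (h.trans (prefixSum_mono ha j.val.le_succ))])
  have hiB : prefixSum a (i + 1) < B := (prefixSum_mono ha hij).trans_lt hjB
  have := prefixSum_succ a i.isLt
  simp only [Fin.eta] at this
  rw [truncateMass, min_eq_left hiB.le,
    min_eq_left ((prefixSum_mono ha i.val.le_succ).trans hiB.le), this]
  ring

lemma antitone_truncateMass (ha₀ : 0 ≤ a) (ha : Antitone a) : Antitone (truncateMass a B) := by
  intro i j hij
  rcases hij.lt_or_eq with hij | rfl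
  · by_cases hj : truncateMass a B j = 0
    · rw [hj]
      exact truncateMass_nonneg ha₀ i
    · rw [truncateMass_eq_of_lt ha₀ hij hj]
      exact (truncateMass_le ha₀ j).trans (ha hij.le)
  · rfl

noncomputable def truncationFactor (a : Fin n → ℝ) (B : ℝ) : Fin n → ℝ :=
  fun i => truncateMass a B i / a i

lemma truncationFactor_nonneg (ha : 0 ≤ a) : 0 ≤ truncationFactor a B :=
  fun i => div_nonneg (truncateMass_nonneg ha i) (ha i)

lemma truncationFactor_le_one (ha : 0 ≤ a) : truncationFactor a B ≤ 1 :=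
  fun i => div_le_one_of_le₀ (truncateMass_le ha i) (ha i)

lemma truncationFactor_mul (ha : 0 ≤ a) (i : Fin n) :
    truncationFactor a B i * a i = truncateMass a B i := by
  rcases (show (0 : ℝ) ≤ a i from ha i).lt_or_eq with hai | hai
  · exact div_mul_cancel₀ _ hai.ne'
  · rw [← hai, mul_zero]
    exact (le_antisymm (hai ▸ truncateMass_le ha i : truncateMass a B i ≤ 0)
      (truncateMass_nonneg ha i)).symm

lemma antitone_truncationFactor (ha₀ : 0 ≤ a) (ha : Antitone a) :
    Antitone (truncationFactor a B) := by
  intro i j hij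
  rcases hij.lt_or_eq with hij | rfl
  · by_cases hj : truncateMass a B j = 0
    · simpa [truncationFactor, hj] using truncationFactor_nonneg ha₀ i
    · have haj : 0 < a j := (lt_of_le_of_ne (truncateMass_nonneg ha₀ j) (Ne.symm hj)).trans_le
        (truncateMass_le ha₀ j)
      rw [truncationFactor, truncationFactor, truncateMass_eq_of_lt ha₀ hij hj,
        div_self (haj.trans_le (ha hij.le)).ne']
      exact truncationFactor_le_one ha₀ j
  · rfl

lemma majorizedBy_truncateMass {b : Fin n → ℝ} (hb₀ : 0 ≤ b)
    (hab : ∀ k, prefixSum b k ≤ prefixSum a k) :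
    MajorizedBy b (truncateMass a (∑ i, b i)) := by
  have hB : 0 ≤ ∑ i, b i := sum_nonneg fun i _ => hb₀ i
  have hb_le_sum : ∀ k, prefixSum b k ≤ ∑ i, b i := fun k => by
    rw [← prefixSum_min, ← prefixSum_of_le b le_rfl]
    exact prefixSum_mono hb₀ (min_le_right k n)
  refine ⟨fun k => ?_, ?_⟩
  · rw [prefixSum_truncateMass hB]
    exact le_min (hab k) (hb_le_sum k)
  · rw [← prefixSum_of_le (truncateMass a _) le_rfl, prefixSum_truncateMass hB, min_eq_right]
    simpa only [prefixSum_of_le _ le_rfl] using hab n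

end TruncateMass

/-- monotone Hardy–Littlewood–Pólya theorem, substochastic case. -/
theorem exists_substochastic_monotone_of_submajorize {n : ℕ} (a b : Fin n → ℝ)
    (ha0 : ∀ i, 0 ≤ a i) (hb0 : ∀ i, 0 ≤ b i)
    (haA : ∀ i j : Fin n, i ≤ j → a j ≤ a i) (hbA : ∀ i j : Fin n, i ≤ j → b j ≤ b i)
    (hmaj : ∀ k : Fin n, ∑ i ∈ Finset.Iic k, b i ≤ ∑ i ∈ Finset.Iic k, a i) :
    ∃ A : Matrix (Fin n) (Fin n) ℝ,
      Substochastic A ∧ MonotoneMatrix A ∧ A.mulVec a = b := by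
  set d := truncationFactor a (∑ i, b i)
  have ha : Antitone a := haA
  have hda : diagonal d *ᵥ a = truncateMass a (∑ i, b i) := by
    ext i
    rw [mulVec_diagonal, truncationFactor_mul ha0]
  obtain ⟨M, hM, hMm, hMa⟩ := exists_mem_doublyStochastic_monotoneMatrix_mulVec_eq
    (antitone_truncateMass ha0 ha) hbA
    (majorizedBy_truncateMass hb0 (prefixSum_le_of_sum_Iic_le hmaj))
  refine ⟨M * diagonal d,
    (substochastic_of_mem_doublyStochastic hM).mul_diagonal (truncationFactor_nonneg ha0)
      (truncationFactor_le_one ha0),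
    hMm.mul (monotoneMatrix_diagonal (truncationFactor_nonneg ha0)
      (antitone_truncationFactor ha0 ha)) fun i j => ?_, by rw [← mulVec_mulVec, hda, hMa]⟩
  by_cases hij : i = j
  · simpa [hij] using truncationFactor_nonneg ha0 j
  · simp [hij]
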